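/- Let p > 1 and let QL : ℝ^d × M^{m×d} → [0,∞) be Borel measurable, 1-periodic in x, satisfying α|ξ|^p ≤ QL(x,ξ) ≤ β(1+|ξ|^p) and the Lipschitz-type estimate |QL(x,ζ) − QL(x,ζ')| ≤ K|ζ − ζ'|(1 + |ζ|^{p−1} + |ζ'|^{p−1}) for all x, ζ, ζ' and some constants α, β, K > 0. Then the homogenized function ℋ(QL)(ξ) := inf_{k≥1} inf { (1/k^d) ∫_{kY} QL(x, ξ + ∇φ) dx : φ ∈ W^{1,p}_0(kY;ℝ^m) } is lower semicontinuous on M^{m×d}. -/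

import Mathlib

open MeasureTheory ENNReal Filter Pointwise Bornology

noncomputable instance {m d : ℕ} : MeasurableSpace (Matrix (Fin m) (Fin d) ℝ) := borel _
instance {m d : ℕ} : BorelSpace (Matrix (Fin m) (Fin d) ℝ) := ⟨rfl⟩

/-- The open cube `(0,k)^d` in `ℝ^d`. -/
def cube (d : ℕ) (k : ℕ) : Set (EuclideanSpace ℝ (Fin d)) :=
  {x | ∀ i, x i ∈ Set.Ioo (0 : ℝ) (k : ℝ)}

/-- The gradient matrix `∇φ(x)` of a map `φ : ℝ^d → ℝ^m`. -/
noncomputable def gradMat {d m : ℕ} (φ : EuclideanSpace ℝ (Fin d) → EuclideanSpace ℝ (Fin m))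
    (x : EuclideanSpace ℝ (Fin d)) : Matrix (Fin m) (Fin d) ℝ :=
  Matrix.of fun i j => fderiv ℝ φ x (EuclideanSpace.single j 1) i

/-- A model for `W^{1,p}_0(A;ℝ^m)`. -/
def W1p0 {d m : ℕ} (p : ℝ≥0∞) (A : Set (EuclideanSpace ℝ (Fin d))) :
    Set (EuclideanSpace ℝ (Fin d) → EuclideanSpace ℝ (Fin m)) :=
  {φ | ContDiff ℝ 1 φ ∧ tsupport φ ⊆ A ∧ MeasureTheory.MemLp φ p ∧
    MeasureTheory.MemLp (fun x => fderiv ℝ φ x) p}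

/-- The Dirichlet set function `𝒮_ξ(A)`. -/
noncomputable def dirichletSetFn {d m : ℕ} (p : ℝ≥0∞)
    (W : EuclideanSpace ℝ (Fin d) → Matrix (Fin m) (Fin d) ℝ → ℝ≥0∞)
    (ξ : Matrix (Fin m) (Fin d) ℝ) (A : Set (EuclideanSpace ℝ (Fin d))) : ℝ≥0∞ :=
  ⨅ φ ∈ W1p0 (d := d) (m := m) p A, ∫⁻ x in A, W x (ξ + gradMat φ x)

attribute [local instance] Matrix.frobeniusNormedAddCommGroup

/-- The Braides–Müller homogenization formula for a finite-valued integrand. -/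
noncomputable def homogenizedReal {d m : ℕ} (p : ℝ≥0∞)
    (QL : EuclideanSpace ℝ (Fin d) → Matrix (Fin m) (Fin d) ℝ → ℝ) :
    Matrix (Fin m) (Fin d) ℝ → ℝ := fun ξ =>
  ⨅ k : {k : ℕ // 1 ≤ k}, ⨅ φ : (W1p0 (d := d) (m := m) p (cube d k.1)),
    (∫ x in cube d k.1, QL x (ξ + gradMat φ.1 x)) / ((k.1 : ℝ) ^ d)

/-! For a fixed cell size `k` and corrector `φ`, the cell average
`E(ξ) = k⁻ᵈ ∫_{kY} QL(x, ξ + ∇φ)` satisfies, by the Lipschitz-type estimate combined with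
coercivity, `E(ξ₀) ≤ (1 + B ω) E(ξ) + A ω` whenever `‖ξ₀ - ξ‖ ≤ 1`, where `ω = K ‖ξ₀ - ξ‖` and
the constants `A`, `B` depend only on `p` and `α`, not on `k` or `φ`. The bound is affine and
increasing in `E(ξ)`, so it passes to the infimum: `ℋ(ξ) ≥ (ℋ(ξ₀) - A ω) / (1 + B ω)`, which
tends to `ℋ(ξ₀)` as `ξ → ξ₀`. -/

open Set Topology

theorem isGLB_ciInf_ciInf {α κ : Type*} [ConditionallyCompleteLattice α] {ι : κ → Type*}
    [Nonempty κ] [∀ k, Nonempty (ι k)] {f : (k : κ) → ι k → α} {b : α}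
    (hb : ∀ k i, b ≤ f k i) :
    IsGLB (range fun q : Σ k, ι k => f q.1 q.2) (⨅ k, ⨅ i, f k i) := by
  have hinner : ∀ k, IsGLB (range (f k)) (⨅ i, f k i) := fun k =>
    isGLB_ciInf ⟨b, forall_mem_range.2 (hb k)⟩
  rw [range_sigma_eq_iUnion_range, ← isGLB_iUnion_iff_of_isGLB hinner]
  exact isGLB_ciInf ⟨b, forall_mem_range.2 fun k => le_ciInf (hb k)⟩

theorem lowerSemicontinuousAt_of_isGLB_of_le_affine {X ι : Type*} [TopologicalSpace X]
    {f : ι → X → ℝ} {H ω : X → ℝ} {x₀ : X} {A B : ℝ}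
    (hH : ∀ x, IsGLB (range fun i => f i x) (H x)) (hω : Tendsto ω (𝓝 x₀) (𝓝 0))
    (hle : ∀ᶠ x in 𝓝 x₀, ∀ i, f i x₀ ≤ (1 + B * ω x) * f i x + A * ω x) :
    LowerSemicontinuousAt H x₀ := by
  intro y hy
  have hden : Tendsto (fun x => 1 + B * ω x) (𝓝 x₀) (𝓝 1) := by
    simpa using tendsto_const_nhds.add (hω.const_mul B)
  have hbound : Tendsto (fun x => (H x₀ - A * ω x) / (1 + B * ω x)) (𝓝 x₀) (𝓝 (H x₀)) := by
    have h := ((tendsto_const_nhds (x := H x₀)).sub (hω.const_mul A)).div hden one_ne_zero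
    simp only [mul_zero, sub_zero, div_one] at h
    exact h
  filter_upwards [hbound.eventually_const_lt hy, hden.eventually_const_lt one_pos, hle]
    with x hyx hpos hle
  refine hyx.trans_le ((hH x).2 ?_)
  rintro _ ⟨i, rfl⟩
  rw [div_le_iff₀' hpos]
  linarith [(hH x₀).1 ⟨i, rfl⟩, hle i]

theorem volume_cube (d k : ℕ) : volume (cube d k) = (k : ℝ≥0∞) ^ d := by
  have hcube : cube d k =
      (MeasurableEquiv.toLp 2 (Fin d → ℝ)).symm ⁻¹' (univ.pi fun _ => Ioo (0 : ℝ) k) := by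
    ext x; simp [cube, Set.mem_pi]
  rw [hcube, (EuclideanSpace.volume_preserving_symm_measurableEquiv_toLp (Fin d)).measure_preimage
    (MeasurableSet.univ_pi fun _ => measurableSet_Ioo).nullMeasurableSet, volume_pi_pi]
  simp [Real.volume_Ioo]

theorem measureReal_cube (d k : ℕ) : volume.real (cube d k) = (k : ℝ) ^ d := by
  simp [measureReal_def, volume_cube]

theorem isBounded_cube (d k : ℕ) : IsBounded (cube d k) := by
  have hsub : cube d k ⊆ WithLp.ofLp ⁻¹' Icc (0 : Fin d → ℝ) fun _ => (k : ℝ) :=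
    fun x hx => ⟨fun i => (hx i).1.le, fun i => (hx i).2.le⟩
  exact ((PiLp.antilipschitzWith_ofLp 2 _).isBounded_preimage (Metric.isBounded_Icc _ _)).subset
    hsub

section Gradient

variable {d m : ℕ} {φ : EuclideanSpace ℝ (Fin d) → EuclideanSpace ℝ (Fin m)}

theorem continuous_gradMat (hφ : ContDiff ℝ 1 φ) : Continuous (gradMat φ) :=
  continuous_pi fun i => continuous_pi fun _ =>
    (EuclideanSpace.proj i).continuous.comp
      ((hφ.continuous_fderiv one_ne_zero).clm_apply continuous_const)

theorem hasCompactSupport_gradMat (hφ : HasCompactSupport φ) :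
    HasCompactSupport (gradMat φ) := by
  have hcomp : gradMat φ = (fun T : EuclideanSpace ℝ (Fin d) →L[ℝ] EuclideanSpace ℝ (Fin m) =>
      Matrix.of fun i j => T (EuclideanSpace.single j 1) i) ∘ fderiv ℝ φ := rfl
  rw [hcomp]
  exact (hφ.fderiv (𝕜 := ℝ)).comp_left (by ext; simp)

theorem exists_norm_gradMat_le {A : Set (EuclideanSpace ℝ (Fin d))} (hA : IsBounded A)
    (hφ : ContDiff ℝ 1 φ) (hsupp : tsupport φ ⊆ A) : ∃ C, ∀ x, ‖gradMat φ x‖ ≤ C :=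
  (continuous_gradMat hφ).bounded_above_of_compact_support <| hasCompactSupport_gradMat <|
    Metric.isCompact_of_isClosed_isBounded (isClosed_tsupport φ) (hA.subset hsupp)

theorem zero_mem_W1p0 (p : ℝ≥0∞) (A : Set (EuclideanSpace ℝ (Fin d))) :
    (0 : EuclideanSpace ℝ (Fin d) → EuclideanSpace ℝ (Fin m)) ∈ W1p0 p A :=
  ⟨contDiff_const, by simp, MemLp.zero, by
    simp only [fderiv_zero]
    exact MemLp.zero' (ε := EuclideanSpace ℝ (Fin d) →L[ℝ] EuclideanSpace ℝ (Fin m))⟩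

end Gradient

theorem rpow_sub_one_le_one_add_rpow {a p : ℝ} (ha : 0 ≤ a) (hp : 1 ≤ p) :
    a ^ (p - 1) ≤ 1 + a ^ p := by
  rcases le_total a 1 with h | h
  · linarith [Real.rpow_le_one ha h (by linarith : 0 ≤ p - 1), Real.rpow_nonneg ha p]
  · linarith [Real.rpow_le_rpow_of_exponent_le h (by linarith : p - 1 ≤ p)]

theorem rpow_le_two_rpow_mul_one_add_rpow {a b p : ℝ} (ha : 0 ≤ a) (hb : 0 ≤ b) (hp : 0 ≤ p)
    (hba : b ≤ a + 1) : b ^ p ≤ 2 ^ p * (1 + a ^ p) := by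
  rcases le_total a 1 with h | h
  · calc b ^ p ≤ 2 ^ p := Real.rpow_le_rpow hb (by linarith) hp
      _ ≤ 2 ^ p * (1 + a ^ p) :=
        le_mul_of_one_le_right (by positivity) (by linarith [Real.rpow_nonneg ha p])
  · calc b ^ p ≤ (2 * a) ^ p := Real.rpow_le_rpow hb (by linarith) hp
      _ = 2 ^ p * a ^ p := Real.mul_rpow zero_le_two ha
      _ ≤ 2 ^ p * (1 + a ^ p) := by gcongr; linarith

theorem le_affine_of_growth_of_lipschitz {E : Type*} [SeminormedAddCommGroup E] {Q : E → ℝ}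
    {p α K : ℝ} (hp : 1 ≤ p) (hα : 0 < α) (hK : 0 ≤ K) (hgrowth : ∀ ζ, α * ‖ζ‖ ^ p ≤ Q ζ)
    (hlip : ∀ ζ ζ', |Q ζ - Q ζ'| ≤ K * ‖ζ - ζ'‖ * (1 + ‖ζ‖ ^ (p - 1) + ‖ζ'‖ ^ (p - 1)))
    {ζ ζ' : E} (h : ‖ζ - ζ'‖ ≤ 1) :
    Q ζ ≤ (1 + (1 + 2 ^ p) / α * (K * ‖ζ - ζ'‖)) * Q ζ' + (3 + 2 ^ p) * (K * ‖ζ - ζ'‖) := by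
  have hnorm : ‖ζ‖ ≤ ‖ζ'‖ + 1 := by linarith [norm_le_norm_add_norm_sub' ζ ζ']
  have hcoercive : (1 + 2 ^ p) * ‖ζ'‖ ^ p ≤ (1 + 2 ^ p) / α * Q ζ' := by
    rw [div_mul_eq_mul_div, le_div_iff₀ hα, mul_assoc]
    gcongr
    linarith [hgrowth ζ']
  have hfactor : 1 + ‖ζ‖ ^ (p - 1) + ‖ζ'‖ ^ (p - 1) ≤ (3 + 2 ^ p) + (1 + 2 ^ p) / α * Q ζ' := by
    linarith [rpow_sub_one_le_one_add_rpow (norm_nonneg ζ) hp,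
      rpow_sub_one_le_one_add_rpow (norm_nonneg ζ') hp,
      rpow_le_two_rpow_mul_one_add_rpow (p := p) (norm_nonneg ζ') (norm_nonneg ζ) (by linarith)
        hnorm]
  calc Q ζ ≤ Q ζ' + K * ‖ζ - ζ'‖ * (1 + ‖ζ‖ ^ (p - 1) + ‖ζ'‖ ^ (p - 1)) := by
        linarith [(le_abs_self _).trans (hlip ζ ζ')]
    _ ≤ Q ζ' + K * ‖ζ - ζ'‖ * ((3 + 2 ^ p) + (1 + 2 ^ p) / α * Q ζ') := by gcongr
    _ = _ := by ring

theorem integrableOn_of_growth {X E : Type*} [MeasurableSpace X] [NormedAddCommGroup E]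
    [MeasurableSpace E] {μ : Measure X} {s : Set X} {Q : X → E → ℝ}
    (hQ : Measurable (Function.uncurry Q)) {p β C : ℝ} (hp : 0 ≤ p) (hβ : 0 ≤ β)
    (hnonneg : ∀ x ζ, 0 ≤ Q x ζ) (hgrowth : ∀ x ζ, Q x ζ ≤ β * (1 + ‖ζ‖ ^ p))
    {g : X → E} (hg : Measurable g) (hC : ∀ x, ‖g x‖ ≤ C) (hs : μ s < ∞) :
    IntegrableOn (fun x => Q x (g x)) s μ := by
  refine .of_bound hs (hQ.comp (measurable_id.prodMk hg)).aestronglyMeasurable (β * (1 + C ^ p))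
    (ae_of_all _ fun x => ?_)
  rw [Real.norm_of_nonneg (hnonneg _ _)]
  calc Q x (g x) ≤ β * (1 + ‖g x‖ ^ p) := hgrowth _ _
    _ ≤ β * (1 + C ^ p) := by gcongr; exact hC x

section CellAverage

variable {d m : ℕ}

noncomputable def cellAverage (QL : EuclideanSpace ℝ (Fin d) → Matrix (Fin m) (Fin d) ℝ → ℝ)
    (k : ℕ) (φ : EuclideanSpace ℝ (Fin d) → EuclideanSpace ℝ (Fin m))
    (ξ : Matrix (Fin m) (Fin d) ℝ) : ℝ :=
  (∫ x in cube d k, QL x (ξ + gradMat φ x)) / (k : ℝ) ^ d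

variable {QL : EuclideanSpace ℝ (Fin d) → Matrix (Fin m) (Fin d) ℝ → ℝ}

theorem cellAverage_nonneg (hQL : ∀ x ζ, 0 ≤ QL x ζ) (k : ℕ)
    (φ : EuclideanSpace ℝ (Fin d) → EuclideanSpace ℝ (Fin m)) (ξ : Matrix (Fin m) (Fin d) ℝ) :
    0 ≤ cellAverage QL k φ ξ :=
  div_nonneg (integral_nonneg fun _ => hQL _ _) (by positivity)

theorem cellAverage_le_affine (hmeas : Measurable (Function.uncurry QL)) {p α β K : ℝ}
    (hp : 1 ≤ p) (hα : 0 < α) (hβ : 0 ≤ β) (hK : 0 ≤ K)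
    (hgrowth : ∀ x ξ, α * ‖ξ‖ ^ p ≤ QL x ξ ∧ QL x ξ ≤ β * (1 + ‖ξ‖ ^ p))
    (hlip : ∀ x ζ ζ', |QL x ζ - QL x ζ'|
      ≤ K * ‖ζ - ζ'‖ * (1 + ‖ζ‖ ^ (p - 1) + ‖ζ'‖ ^ (p - 1)))
    {k : ℕ} (hk : 0 < k) {φ : EuclideanSpace ℝ (Fin d) → EuclideanSpace ℝ (Fin m)}
    (hφ : ContDiff ℝ 1 φ) (hsupp : tsupport φ ⊆ cube d k) {ξ₀ ξ : Matrix (Fin m) (Fin d) ℝ}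
    (hξ : ‖ξ₀ - ξ‖ ≤ 1) :
    cellAverage QL k φ ξ₀ ≤ (1 + (1 + 2 ^ p) / α * (K * ‖ξ₀ - ξ‖)) * cellAverage QL k φ ξ
      + (3 + 2 ^ p) * (K * ‖ξ₀ - ξ‖) := by
  set a := 1 + (1 + 2 ^ p) / α * (K * ‖ξ₀ - ξ‖)
  set b := (3 + 2 ^ p) * (K * ‖ξ₀ - ξ‖)
  obtain ⟨C, hC⟩ := exists_norm_gradMat_le (isBounded_cube d k) hφ hsupp
  have hint : ∀ ζ, IntegrableOn (fun x => QL x (ζ + gradMat φ x)) (cube d k) := fun ζ =>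
    integrableOn_of_growth (g := fun x => ζ + gradMat φ x) hmeas (by linarith) hβ
      (fun x η => (mul_nonneg hα.le (by positivity)).trans (hgrowth x η).1)
      (fun x η => (hgrowth x η).2) (continuous_const.add (continuous_gradMat hφ)).measurable
      (C := ‖ζ‖ + C) (fun x => (norm_add_le _ _).trans (add_le_add le_rfl (hC x)))
      (isBounded_cube d k).measure_lt_top
  have hpointwise : ∀ x, QL x (ξ₀ + gradMat φ x) ≤ a * QL x (ξ + gradMat φ x) + b := fun x => by
    simpa only [add_sub_add_right_eq_sub] using
      le_affine_of_growth_of_lipschitz hp hα hK (fun ζ => (hgrowth x ζ).1) (hlip x)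
        (ζ := ξ₀ + gradMat φ x) (ζ' := ξ + gradMat φ x) (by rwa [add_sub_add_right_eq_sub])
  have hintegral : ∫ x in cube d k, QL x (ξ₀ + gradMat φ x)
      ≤ a * (∫ x in cube d k, QL x (ξ + gradMat φ x)) + b * (k : ℝ) ^ d := by
    calc ∫ x in cube d k, QL x (ξ₀ + gradMat φ x)
        ≤ ∫ x in cube d k, (a * QL x (ξ + gradMat φ x) + b) :=
          setIntegral_mono (hint ξ₀) (((hint ξ).const_mul a).add
            (integrableOn_const (isBounded_cube d k).measure_lt_top.ne)) hpointwise
      _ = _ := by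
          rw [integral_add ((hint ξ).const_mul a)
            (integrableOn_const (isBounded_cube d k).measure_lt_top.ne), integral_const_mul,
            setIntegral_const, measureReal_cube, smul_eq_mul, mul_comm _ b]
  have hkd : (0 : ℝ) < (k : ℝ) ^ d := by positivity
  rw [cellAverage, cellAverage, div_le_iff₀ hkd]
  calc _ ≤ a * (∫ x in cube d k, QL x (ξ + gradMat φ x)) + b * (k : ℝ) ^ d := hintegral
    _ = _ := by field_simp

theorem isGLB_homogenizedReal (hQL : ∀ x ζ, 0 ≤ QL x ζ) (P : ℝ≥0∞)
    (ξ : Matrix (Fin m) (Fin d) ℝ) :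
    IsGLB (range fun q : Σ k : {k : ℕ // 1 ≤ k}, W1p0 (d := d) (m := m) P (cube d k) =>
      cellAverage QL q.1 q.2 ξ) (homogenizedReal P QL ξ) :=
  have : Nonempty {k : ℕ // 1 ≤ k} := ⟨⟨1, le_rfl⟩⟩
  have (k : {k : ℕ // 1 ≤ k}) : Nonempty (W1p0 (d := d) (m := m) P (cube d k)) :=
    ⟨⟨0, zero_mem_W1p0 _ _⟩⟩
  isGLB_ciInf_ciInf
    (f := fun (k : {k : ℕ // 1 ≤ k}) (φ : W1p0 (d := d) (m := m) P (cube d k)) =>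
      cellAverage QL k φ ξ)
    fun _ _ => cellAverage_nonneg hQL _ _ ξ

end CellAverage

theorem homogenizedReal_lowerSemicontinuous_general {d m : ℕ} (p : ℝ) (hp : 1 < p)
    (QL : EuclideanSpace ℝ (Fin d) → Matrix (Fin m) (Fin d) ℝ → ℝ)
    (hmeas : Measurable (Function.uncurry QL))
    (α β K : ℝ) (hα : 0 < α) (hβ : 0 < β) (hK : 0 < K)
    (hgrowth : ∀ x ξ, α * ‖ξ‖ ^ p ≤ QL x ξ ∧ QL x ξ ≤ β * (1 + ‖ξ‖ ^ p))
    (hlip : ∀ x ζ ζ', |QL x ζ - QL x ζ'|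
      ≤ K * ‖ζ - ζ'‖ * (1 + ‖ζ‖ ^ (p - 1) + ‖ζ'‖ ^ (p - 1))) :
    LowerSemicontinuous (homogenizedReal (ENNReal.ofReal p) QL) := by
  have hnonneg : ∀ x ζ, 0 ≤ QL x ζ := fun x ζ =>
    (mul_nonneg hα.le (Real.rpow_nonneg (norm_nonneg ζ) p)).trans (hgrowth x ζ).1
  refine lowerSemicontinuous_iff.2 fun ξ₀ => ?_
  have hω : Tendsto (fun ξ => K * ‖ξ₀ - ξ‖) (𝓝 ξ₀) (𝓝 0) :=
    ((continuous_const.sub continuous_id).norm.const_mul K).tendsto' ξ₀ 0 (by simp)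
  refine lowerSemicontinuousAt_of_isGLB_of_le_affine (A := 3 + 2 ^ p) (B := (1 + 2 ^ p) / α)
    (isGLB_homogenizedReal hnonneg _) hω ?_
  filter_upwards [Metric.closedBall_mem_nhds ξ₀ one_pos] with ξ hξ
  rintro ⟨k, φ, hφ, hsupp, -⟩
  exact cellAverage_le_affine hmeas hp.le hα hβ.le hK.le hgrowth hlip k.2 hφ hsupp
    (by rwa [Metric.mem_closedBall, dist_eq_norm'] at hξ)

/-- for a periodic integrand `QL` with `p`-growth (`p > 1`) and the
Lipschitz-type estimate, the homogenized function `ℋ(QL)` is lower semicontinuous. -/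
theorem homogenizedReal_lowerSemicontinuous {d m : ℕ} (p : ℝ) (hp : 1 < p)
    (QL : EuclideanSpace ℝ (Fin d) → Matrix (Fin m) (Fin d) ℝ → ℝ)
    (hmeas : Measurable (Function.uncurry QL))
    (hper : ∀ (x : EuclideanSpace ℝ (Fin d)) (z : Fin d → ℤ) (ξ : Matrix (Fin m) (Fin d) ℝ),
      QL (x + (WithLp.equiv 2 (Fin d → ℝ)).symm fun i => (z i : ℝ)) ξ = QL x ξ)
    (α β K : ℝ) (hα : 0 < α) (hβ : 0 < β) (hK : 0 < K)
    (hgrowth : ∀ x ξ, α * ‖ξ‖ ^ p ≤ QL x ξ ∧ QL x ξ ≤ β * (1 + ‖ξ‖ ^ p))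
    (hlip : ∀ x ζ ζ', |QL x ζ - QL x ζ'|
      ≤ K * ‖ζ - ζ'‖ * (1 + ‖ζ‖ ^ (p - 1) + ‖ζ'‖ ^ (p - 1))) :
    LowerSemicontinuous (homogenizedReal (ENNReal.ofReal p) QL) :=
  homogenizedReal_lowerSemicontinuous_general p hp QL hmeas α β K hα hβ hK hgrowth hlip
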